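/- arXiv:1702.02667 — 6 statements merged into one kernel-verified Lean document; each statement's English description precedes it below -/
import Mathlib

section
/- For every s ∈ [0,1), F(s) ≤ f(s) and 1 ≤ exp(f(s) − F(s)) ≤ (1 − 4κ²)^{-1}. -/
/-- With `κ`, `f`, admissible `φ` and `F(s) = ∫₀^s φ f'` as in the context:
for every `s ∈ [0,1)`, `F(s) ≤ f(s)` and `1 ≤ exp(f(s) - F(s)) ≤ (1 - 4κ²)⁻¹`. -/
theorem stmt_4 (κ : ℝ) (hκ0 : 0 < κ) (hκ1 : κ < 1/8)
    (f : ℝ → ℝ)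
    (hf : ∀ s : ℝ, f s = if s ≤ 1 - κ then 0 else -Real.log (1 - ((s - 1 + κ) / κ)^2))
    (φ : ℝ → ℝ) (hφsmooth : ContDiff ℝ (⊤ : ℕ∞) φ)
    (hφ0 : ∀ s, 0 ≤ φ s) (hφ1 : ∀ s, φ s ≤ 1)
    (hφa : ∀ s, s ≤ 1 - κ + κ^2 → φ s = 0)
    (hφb : ∀ s, 1 - κ + 2 * κ^2 ≤ s → φ s = 1)
    (hφ'0 : ∀ s, 0 ≤ deriv φ s) (hφ'1 : ∀ s, deriv φ s ≤ 2 / κ^2)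
    (F : ℝ → ℝ) (hF : ∀ s : ℝ, F s = ∫ τ in (0:ℝ)..s, φ τ * deriv f τ) :
    ∀ s ∈ Set.Ico (0:ℝ) 1,
      F s ≤ f s
      ∧ 1 ≤ Real.exp (f s - F s)
      ∧ Real.exp (f s - F s) ≤ (1 - 4 * κ^2)⁻¹ := by
  have hκ2 : 0 < κ^2 := by positivity
  have h4κ : 0 < 1 - 4*κ^2 := by nlinarith
  have ha1 : 1 - κ + κ^2 < 1 := by nlinarith
  have hb1 : 1 - κ + 2*κ^2 < 1 := by nlinarith
  have hka : 1 - κ < 1 - κ + κ^2 := by nlinarith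
  have hab : 1 - κ + κ^2 ≤ 1 - κ + 2*κ^2 := by nlinarith
  have ha0 : (0:ℝ) ≤ 1 - κ + κ^2 := by nlinarith
  set D : ℝ → ℝ := fun τ => (2*(τ - 1 + κ)/κ^2) / (1 - ((τ - 1 + κ)/κ)^2) with hDdef
  -- positivity of the denominator
  have hvpos : ∀ τ ∈ Set.Ioo (1-κ) (1:ℝ), 0 < 1 - ((τ - 1 + κ)/κ)^2 := by
    intro τ hτ
    have h1 : 0 < (τ - 1 + κ)/κ := div_pos (by linarith [hτ.1]) hκ0
    have h2 : (τ - 1 + κ)/κ < 1 := by rw [div_lt_one hκ0]; linarith [hτ.2]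
    nlinarith
  -- f has derivative D on (1-κ, 1)
  have hD : ∀ τ ∈ Set.Ioo (1-κ) (1:ℝ), HasDerivAt f (D τ) τ := by
    intro τ hτ
    have hv := hvpos τ hτ
    have h1 : HasDerivAt (fun s : ℝ => (s - 1 + κ)/κ) (1/κ) τ := by
      have := (((hasDerivAt_id τ).sub_const 1).add_const κ).div_const κ
      simpa using this
    have h2 := h1.pow 2
    have h3 := h2.const_sub 1
    have h4 := (Real.hasDerivAt_log hv.ne').comp τ h3
    have h5 := h4.neg
    have h6 : HasDerivAt (fun s => -Real.log (1 - ((s - 1 + κ)/κ)^2)) (D τ) τ := by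
      convert h5 using 1
      · rfl
      · rfl
      · rfl
      rw [hDdef]
      have hv' : 1 - ((τ - 1 + κ)/κ)^2 ≠ 0 := hv.ne'
      norm_num
      rw [div_eq_inv_mul]
      congr 1
      field_simp
    apply h6.congr_of_eventuallyEq
    filter_upwards [Ioi_mem_nhds hτ.1] with x hx
    rw [hf x, if_neg (not_le.mpr hx)]
  have hderiv : ∀ τ ∈ Set.Ioo (1-κ) (1:ℝ), deriv f τ = D τ := fun τ hτ => (hD τ hτ).deriv
  have hD0 : ∀ τ ∈ Set.Ioo (1-κ) (1:ℝ), 0 ≤ D τ := by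
    intro τ hτ
    have h1 : (0:ℝ) ≤ τ - 1 + κ := by linarith [hτ.1]
    exact div_nonneg (div_nonneg (by linarith) hκ2.le) (hvpos τ hτ).le
  -- continuity of the integrand on (-∞, 1)
  have hφcont : Continuous φ := hφsmooth.continuous
  have hDcont : ContinuousOn D (Set.Ioo (1-κ) 1) := by
    apply ContinuousOn.div
    · fun_prop
    · fun_prop
    · intro τ hτ; exact (hvpos τ hτ).ne'
  have hcont : ∀ τ ∈ Set.Iio (1:ℝ), ContinuousAt (fun τ => φ τ * deriv f τ) τ := by
    intro τ hτ
    rcases lt_or_ge τ (1 - κ + κ^2) with hlt | hge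
    · have he : (fun τ => φ τ * deriv f τ) =ᶠ[nhds τ] (fun _ => (0:ℝ)) := by
        filter_upwards [Iio_mem_nhds hlt] with x hx
        rw [hφa x hx.le, zero_mul]
      exact ContinuousAt.congr (continuousAt_const) he.symm
    · have hτI : τ ∈ Set.Ioo (1-κ) (1:ℝ) := ⟨by linarith, hτ⟩
      have hmem : Set.Ioo (1-κ) (1:ℝ) ∈ nhds τ := Ioo_mem_nhds hτI.1 hτI.2
      have he : (fun τ => φ τ * deriv f τ) =ᶠ[nhds τ] (fun τ => φ τ * D τ) := by
        filter_upwards [hmem] with x hx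
        rw [hderiv x hx]
      have hc : ContinuousAt (fun τ => φ τ * D τ) τ :=
        (hφcont.continuousAt).mul (hDcont.continuousAt hmem)
      exact hc.congr he.symm
  have hIntH : ∀ x y : ℝ, x < 1 → y < 1 →
      IntervalIntegrable (fun τ => φ τ * deriv f τ) MeasureTheory.volume x y := by
    intro x y hx hy
    apply ContinuousOn.intervalIntegrable
    intro τ hτ
    exact (hcont τ (lt_of_le_of_lt hτ.2 (max_lt hx hy))).continuousWithinAt
  have hIntD : ∀ x y : ℝ, 1-κ < x → 1-κ < y → x < 1 → y < 1 →
      IntervalIntegrable D MeasureTheory.volume x y := by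
    intro x y hx1 hy1 hx2 hy2
    apply ContinuousOn.intervalIntegrable
    apply hDcont.mono
    intro τ hτ
    exact ⟨lt_of_lt_of_le (lt_min hx1 hy1) hτ.1, lt_of_le_of_lt hτ.2 (max_lt hx2 hy2)⟩
  -- FTC for f on compact subintervals of (1-κ, 1)
  have hFTC : ∀ x y : ℝ, 1-κ < x → x ≤ y → y < 1 → f y - f x = ∫ τ in x..y, D τ := by
    intro x y hx hxy hy
    refine (intervalIntegral.integral_eq_sub_of_hasDerivAt ?_ ?_).symm
    · intro t ht
      rw [Set.uIcc_of_le hxy] at ht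
      exact hD t ⟨lt_of_lt_of_le hx ht.1, lt_of_le_of_lt ht.2 hy⟩
    · exact hIntD x y hx (by linarith) (by linarith) hy
  -- values and bounds of f
  have hfval : ∀ t : ℝ, 1-κ < t → f t = -Real.log (1 - ((t - 1 + κ)/κ)^2) := by
    intro t ht; rw [hf t, if_neg (not_le.mpr ht)]
  have hfpos : ∀ t : ℝ, 1-κ < t → t < 1 → 0 ≤ f t := by
    intro t h1 h2
    rw [hfval t h1]
    have hv := hvpos t ⟨h1, h2⟩
    have : 1 - ((t - 1 + κ)/κ)^2 ≤ 1 := by nlinarith [sq_nonneg ((t - 1 + κ)/κ)]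
    simpa using Real.log_nonpos hv.le this
  have hfleM : ∀ t : ℝ, 1-κ < t → t ≤ 1 - κ + 2*κ^2 → f t ≤ -Real.log (1 - 4*κ^2) := by
    intro t h1 h2
    rw [hfval t h1]
    have ht1 : t < 1 := by linarith
    have hv := hvpos t ⟨h1, ht1⟩
    have hu : ((t - 1 + κ)/κ)^2 ≤ 4*κ^2 := by
      rw [div_pow, div_le_iff₀ (by positivity)]
      nlinarith
    have : (1 - 4*κ^2) ≤ 1 - ((t - 1 + κ)/κ)^2 := by linarith
    have := Real.log_le_log h4κ this
    linarith
  have hM0 : 0 ≤ -Real.log (1 - 4*κ^2) := by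
    have : (1:ℝ) - 4*κ^2 ≤ 1 := by nlinarith
    simpa using Real.log_nonpos h4κ.le this
  -- F vanishes up to a = 1 - κ + κ²
  have hFzero : ∀ t : ℝ, 0 ≤ t → t ≤ 1 - κ + κ^2 → F t = 0 := by
    intro t ht0 hta
    rw [hF t]
    have : Set.EqOn (fun τ => φ τ * deriv f τ) (fun _ => (0:ℝ)) (Set.uIcc 0 t) := by
      intro τ hτ
      rw [Set.uIcc_of_le ht0] at hτ
      simp only
      rw [hφa τ (le_trans hτ.2 hta), zero_mul]
    rw [intervalIntegral.integral_congr this]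
    simp
  -- the key estimate
  intro s hs
  obtain ⟨hs0, hs1⟩ := hs
  have key : 0 ≤ f s - F s ∧ f s - F s ≤ -Real.log (1 - 4*κ^2) := by
    rcases le_or_gt s (1 - κ + κ^2) with hsa | hsa
    · rw [hFzero s hs0 hsa]
      rcases le_or_gt s (1 - κ) with hsk | hsk
      · rw [hf s, if_pos hsk]; exact ⟨by norm_num, by simpa using hM0⟩
      · exact ⟨by simpa using hfpos s hsk hs1, by simpa using hfleM s hsk (by linarith)⟩
    · -- split the integral at a = 1 - κ + κ²
      have hFs : F s = ∫ τ in (1 - κ + κ^2)..s, φ τ * deriv f τ := by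
        rw [hF s,
          ← intervalIntegral.integral_add_adjacent_intervals
            (hIntH 0 (1 - κ + κ^2) (by linarith) ha1) (hIntH (1 - κ + κ^2) s ha1 hs1)]
        have h0 : (∫ τ in (0:ℝ)..(1 - κ + κ^2), φ τ * deriv f τ) = 0 := by
          have := hFzero (1 - κ + κ^2) ha0 le_rfl
          rw [hF (1 - κ + κ^2)] at this
          exact this
        rw [h0, zero_add]
      have main : f s - F s
          = f (1 - κ + κ^2) + ∫ τ in (1 - κ + κ^2)..s, (D τ - φ τ * deriv f τ) := by
        rw [hFs, intervalIntegral.integral_sub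
          (hIntD (1 - κ + κ^2) s hka (by linarith) ha1 hs1) (hIntH (1 - κ + κ^2) s ha1 hs1)]
        have hftc := hFTC (1 - κ + κ^2) s hka hsa.le hs1
        linarith
      have hnn : ∀ u ∈ Set.Icc (1 - κ + κ^2) s, 0 ≤ D u - φ u * deriv f u := by
        intro u hu
        have huI : u ∈ Set.Ioo (1-κ) (1:ℝ) := ⟨by linarith [hu.1], lt_of_le_of_lt hu.2 hs1⟩
        rw [hderiv u huI]
        nlinarith [hD0 u huI, hφ1 u, hφ0 u]
      have hge : 0 ≤ ∫ τ in (1 - κ + κ^2)..s, (D τ - φ τ * deriv f τ) :=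
        intervalIntegral.integral_nonneg hsa.le hnn
      have hfa0 : 0 ≤ f (1 - κ + κ^2) := hfpos _ hka ha1
      have hfaM : f (1 - κ + κ^2) ≤ -Real.log (1 - 4*κ^2) := hfleM _ hka hab
      constructor
      · rw [main]; linarith
      · rcases le_or_gt s (1 - κ + 2*κ^2) with hsb | hsb
        · have hle : (∫ τ in (1 - κ + κ^2)..s, (D τ - φ τ * deriv f τ))
              ≤ ∫ τ in (1 - κ + κ^2)..s, D τ := by
            apply intervalIntegral.integral_mono_on hsa.le
              ((hIntD (1 - κ + κ^2) s hka (by linarith) ha1 hs1).sub (hIntH (1 - κ + κ^2) s ha1 hs1))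
              (hIntD (1 - κ + κ^2) s hka (by linarith) ha1 hs1)
            intro u hu
            have huI : u ∈ Set.Ioo (1-κ) (1:ℝ) := ⟨by linarith [hu.1], lt_of_le_of_lt hu.2 hs1⟩
            have hd : 0 ≤ deriv f u := by rw [hderiv u huI]; exact hD0 u huI
            have := mul_nonneg (hφ0 u) hd
            linarith
          have hftc := hFTC (1 - κ + κ^2) s hka hsa.le hs1
          have := hfleM s (by linarith) hsb
          rw [main]; linarith
        · -- s > b : split the integral at b
          have hsplit : (∫ τ in (1 - κ + κ^2)..s, (D τ - φ τ * deriv f τ))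
              = (∫ τ in (1 - κ + κ^2)..(1 - κ + 2*κ^2), (D τ - φ τ * deriv f τ))
                + ∫ τ in (1 - κ + 2*κ^2)..s, (D τ - φ τ * deriv f τ) := by
            rw [intervalIntegral.integral_add_adjacent_intervals
              ((hIntD _ _ hka (by linarith) ha1 hb1).sub (hIntH _ _ ha1 hb1))
              ((hIntD _ _ (by linarith) (by linarith) hb1 hs1).sub (hIntH _ _ hb1 hs1))]
          have hzero : (∫ τ in (1 - κ + 2*κ^2)..s, (D τ - φ τ * deriv f τ)) = 0 := by
            have : Set.EqOn (fun τ => D τ - φ τ * deriv f τ) (fun _ => (0:ℝ))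
                (Set.uIcc (1 - κ + 2*κ^2) s) := by
              intro τ hτ
              rw [Set.uIcc_of_le hsb.le] at hτ
              have hτI : τ ∈ Set.Ioo (1-κ) (1:ℝ) :=
                ⟨by linarith [hτ.1], lt_of_le_of_lt hτ.2 hs1⟩
              simp only
              rw [hderiv τ hτI, hφb τ hτ.1, one_mul, sub_self]
            rw [intervalIntegral.integral_congr this]
            simp
          have hle : (∫ τ in (1 - κ + κ^2)..(1 - κ + 2*κ^2), (D τ - φ τ * deriv f τ))
              ≤ ∫ τ in (1 - κ + κ^2)..(1 - κ + 2*κ^2), D τ := by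
            apply intervalIntegral.integral_mono_on hab
              ((hIntD _ _ hka (by linarith) ha1 hb1).sub (hIntH _ _ ha1 hb1))
              (hIntD _ _ hka (by linarith) ha1 hb1)
            intro u hu
            have huI : u ∈ Set.Ioo (1-κ) (1:ℝ) := ⟨by linarith [hu.1], by linarith [hu.2]⟩
            have hd : 0 ≤ deriv f u := by rw [hderiv u huI]; exact hD0 u huI
            have := mul_nonneg (hφ0 u) hd
            linarith
          have hftc := hFTC (1 - κ + κ^2) (1 - κ + 2*κ^2) hka hab hb1
          have hfb := hfleM (1 - κ + 2*κ^2) (by linarith) le_rfl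
          rw [main, hsplit, hzero]; linarith
  obtain ⟨k1, k2⟩ := key
  refine ⟨by linarith, Real.one_le_exp (by linarith), ?_⟩
  have hmon : Real.exp (f s - F s) ≤ Real.exp (-Real.log (1 - 4*κ^2)) := Real.exp_le_exp.mpr k2
  rwa [Real.exp_neg, Real.exp_log h4κ] at hmon
end

section
/- There exists an absolute constant c₁ > 0 (independent of κ and φ) such that for every κ ∈ (0, 1/8), every admissible φ, and every s ∈ [0,1): 0 ≤ e^{−F(s)} F′(s) ≤ c₁/κ and 0 ≤ e^{−2F(s)} F″(s) ≤ c₁/κ². -/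
set_option maxHeartbeats 1600000 in
/-- There is an absolute constant `c₁ > 0` (independent of `κ` and `φ`) such that
for every `κ ∈ (0, 1/8)`, every admissible cutoff `φ` and `F(s) = ∫₀^s φ f'`:
for every `s ∈ [0,1)`, `0 ≤ e^{-F(s)} F'(s) ≤ c₁/κ` and `0 ≤ e^{-2F(s)} F''(s) ≤ c₁/κ²`. -/
theorem stmt_5 :
    ∃ c₁ : ℝ, 0 < c₁ ∧
      ∀ (κ : ℝ), 0 < κ → κ < 1/8 →
      ∀ (f φ F : ℝ → ℝ),
        (∀ s : ℝ, f s = if s ≤ 1 - κ then 0 else -Real.log (1 - ((s - 1 + κ) / κ)^2)) →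
        ContDiff ℝ (⊤ : ℕ∞) φ → (∀ s, 0 ≤ φ s) → (∀ s, φ s ≤ 1) →
        (∀ s, s ≤ 1 - κ + κ^2 → φ s = 0) →
        (∀ s, 1 - κ + 2 * κ^2 ≤ s → φ s = 1) →
        (∀ s, 0 ≤ deriv φ s) → (∀ s, deriv φ s ≤ 2 / κ^2) →
        (∀ s : ℝ, F s = ∫ τ in (0:ℝ)..s, φ τ * deriv f τ) →
        ∀ s ∈ Set.Ico (0:ℝ) 1,
          0 ≤ Real.exp (-F s) * deriv F s
          ∧ Real.exp (-F s) * deriv F s ≤ c₁ / κ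
          ∧ 0 ≤ Real.exp (-2 * F s) * deriv (deriv F) s
          ∧ Real.exp (-2 * F s) * deriv (deriv F) s ≤ c₁ / κ^2 := by
  refine ⟨100, by norm_num, ?_⟩
  intro κ hκ0 hκ8 f φ F hf hφ hφ0 hφ1 hφl hφr hφd0 hφd2 hF s hs
  obtain ⟨hs0, hs1⟩ := hs
  have hκ1 : κ < 1 := by linarith
  have hκ2 : (0:ℝ) < κ^2 := by positivity
  have hκne : κ ≠ 0 := ne_of_gt hκ0
  set b := 1 - κ + κ^2 with hb
  set a := 1 - κ + 2*κ^2 with ha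
  have hba : b < a := by simp only [hb, ha]; nlinarith
  have hb1 : b < 1 := by simp only [hb]; nlinarith
  have ha1 : a < 1 := by simp only [ha]; nlinarith
  have h1κb : 1 - κ < b := by simp only [hb]; nlinarith
  have ha0 : 0 < a := by simp only [ha]; nlinarith
  set ψ : ℝ → ℝ := fun x => 2*(x-1+κ)/(κ^2-(x-1+κ)^2) with hψdef
  set χ : ℝ → ℝ := fun x => 2*(κ^2+(x-1+κ)^2)/((κ^2-(x-1+κ)^2)^2) with hχdef
  set g : ℝ → ℝ := fun x => φ x * deriv f x with hgdef
  set L : ℝ → ℝ := fun x => -Real.log (1 - ((x-1+κ)/κ)^2) with hLdef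
  have hφdiff : Differentiable ℝ φ := hφ.differentiable (by simp)
  have hden : ∀ x ∈ Set.Ioo (1-κ) 1, 0 < κ^2 - (x-1+κ)^2 := by
    intro x hx; nlinarith [hx.1, hx.2]
  -- derivative of L on (1-κ, 1)
  have hLd : ∀ x ∈ Set.Ioo (1-κ) 1, HasDerivAt L (ψ x) x := by
    intro x hx
    have hd := hden x hx
    have hw : 0 < 1 - ((x-1+κ)/κ)^2 := by
      rw [div_pow, sub_pos, div_lt_one hκ2]; nlinarith [hx.1, hx.2]
    have h2 : HasDerivAt (fun y : ℝ => (y-1+κ)/κ) (1/κ) x := by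
      simpa using (((hasDerivAt_id x).sub_const 1).add_const κ).div_const κ
    have h1 : HasDerivAt (fun y : ℝ => 1 - ((y-1+κ)/κ)^2) (-(2*(x-1+κ)/κ^2)) x := by
      have h3 := (h2.pow 2).const_sub 1
      refine h3.congr_deriv (Eq.symm ?_)
      push_cast
      rw [pow_one]
      field_simp
      try ring
      try tauto
    have h4 := (h1.log hw.ne').neg
    refine h4.congr_deriv (Eq.symm ?_)
    rw [hψdef]
    field_simp
  have hfd : ∀ x ∈ Set.Ioo (1-κ) 1, HasDerivAt f (ψ x) x := by
    intro x hx
    refine (hLd x hx).congr_of_eventuallyEq ?_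
    filter_upwards [Ioi_mem_nhds hx.1] with y hy
    rw [hf y, if_neg (not_le.mpr hy), hLdef]
  have hψd : ∀ x ∈ Set.Ioo (1-κ) 1, HasDerivAt ψ (χ x) x := by
    intro x hx
    have hd := hden x hx
    have hnum : HasDerivAt (fun y : ℝ => 2*(y-1+κ)) 2 x := by
      simpa using (((hasDerivAt_id x).sub_const 1).add_const κ).const_mul 2
    have hden' : HasDerivAt (fun y : ℝ => κ^2-(y-1+κ)^2) (-(2*(x-1+κ))) x := by
      have h2 : HasDerivAt (fun y : ℝ => (y-1+κ)) 1 x := by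
        simpa using ((hasDerivAt_id x).sub_const 1).add_const κ
      have h3 := (h2.pow 2).const_sub (κ^2)
      refine h3.congr_deriv (Eq.symm ?_); push_cast; ring
    have h5 := hnum.div hden' hd.ne'
    refine h5.congr_deriv (Eq.symm ?_)
    rw [hχdef]
    field_simp
    ring
  have hgψ : ∀ x ∈ Set.Ioo (1-κ) 1, g x = φ x * ψ x := by
    intro x hx
    rw [hgdef]; simp only
    rw [(hfd x hx).deriv]
  have hg0 : ∀ x, x ≤ b → g x = 0 := by
    intro x hx
    rw [hgdef]; simp only
    rw [hφl x hx, zero_mul]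
  have hψ0 : ∀ x ∈ Set.Ioo (1-κ) 1, 0 ≤ ψ x := by
    intro x hx
    have hd := hden x hx
    apply div_nonneg _ hd.le
    nlinarith [hx.1]
  have hgnn : ∀ x, x < 1 → 0 ≤ g x := by
    intro x hx
    rcases le_or_gt x b with h | h
    · rw [hg0 x h]
    · have hxI : x ∈ Set.Ioo (1-κ) 1 := ⟨h1κb.trans h, hx⟩
      rw [hgψ x hxI]
      exact mul_nonneg (hφ0 x) (hψ0 x hxI)
  have hgc : ∀ x, x < 1 → ContinuousAt g x := by
    intro x hx
    rcases lt_or_ge x b with h | h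
    · have hev : (fun _ : ℝ => (0:ℝ)) =ᶠ[nhds x] g := by
        filter_upwards [Iio_mem_nhds h] with y hy
        exact (hg0 y hy.le).symm
      exact continuousAt_const.congr hev
    · have hxI : x ∈ Set.Ioo (1-κ) 1 := ⟨h1κb.trans_le h, hx⟩
      have hev : (fun y => φ y * ψ y) =ᶠ[nhds x] g := by
        filter_upwards [isOpen_Ioo.mem_nhds hxI] with y hy
        exact (hgψ y hy).symm
      exact ((hφdiff x).continuousAt.mul (hψd x hxI).continuousAt).congr hev
  have hgcOn : ContinuousOn g (Set.Iio 1) := fun x hx => (hgc x hx).continuousWithinAt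
  have hIntg : ∀ p q : ℝ, p < 1 → q < 1 → IntervalIntegrable g MeasureTheory.volume p q := by
    intro p q hp hq
    apply (hgcOn.mono ?_).intervalIntegrable
    intro x hx
    rw [Set.mem_Iio]
    rcases Set.mem_uIcc.mp hx with ⟨_, h2⟩ | ⟨_, h2⟩
    · exact h2.trans_lt hq
    · exact h2.trans_lt hp
  have hFd : ∀ x, x < 1 → HasDerivAt F (g x) x := by
    intro x hx
    have h1 : HasDerivAt (fun y => ∫ t in (0:ℝ)..y, g t) (g x) x :=
      intervalIntegral.integral_hasDerivAt_right (hIntg 0 x one_pos hx)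
        (hgcOn.stronglyMeasurableAtFilter isOpen_Iio x hx) (hgc x hx)
    have hFe : F = fun y => ∫ t in (0:ℝ)..y, g t := funext hF
    rw [hFe]
    exact h1
  have hdF : ∀ x, x < 1 → deriv F x = g x := fun x hx => (hFd x hx).deriv
  have hFnn : ∀ t, 0 ≤ t → t < 1 → 0 ≤ F t := by
    intro t ht0 ht1
    rw [hF t]
    apply intervalIntegral.integral_nonneg ht0
    intro x hx
    exact hgnn x (hx.2.trans_lt ht1)
  rcases lt_or_ge s b with hsb | hsb
  · -- trivial region : everything vanishes
    have h1 : deriv F s = 0 := by rw [hdF s hs1]; exact hg0 s hsb.le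
    have h2 : deriv (deriv F) s = 0 := by
      have he : deriv F =ᶠ[nhds s] (fun _ => (0:ℝ)) := by
        filter_upwards [Iio_mem_nhds hsb] with y hy
        rw [hdF y (hy.trans hb1), hg0 y hy.le]
      rw [he.deriv_eq, deriv_const]
    rw [h1, h2, mul_zero, mul_zero]
    refine ⟨le_refl _, by positivity, le_refl _, by positivity⟩
  · -- main region
    have hsI : s ∈ Set.Ioo (1-κ) 1 := ⟨h1κb.trans_le hsb, hs1⟩
    have hv0 : κ^2 ≤ s - 1 + κ := by simp only [hb] at hsb; linarith
    have hv1 : s - 1 + κ < κ := by linarith [hsI.2]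
    have hdpos : 0 < κ^2 - (s-1+κ)^2 := hden s hsI
    have hψs0 : 0 ≤ ψ s := hψ0 s hsI
    have hχs0 : 0 ≤ χ s := by
      rw [hχdef]
      apply div_nonneg _ (sq_nonneg _)
      nlinarith
    have hds : deriv F s = φ s * ψ s := by rw [hdF s hs1]; exact hgψ s hsI
    have hdd : deriv (deriv F) s = deriv φ s * ψ s + φ s * χ s := by
      have hdFg : deriv F =ᶠ[nhds s] g := by
        filter_upwards [Iio_mem_nhds hs1] with y hy
        exact hdF y hy
      have hgev : g =ᶠ[nhds s] fun y => φ y * ψ y := by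
        filter_upwards [isOpen_Ioo.mem_nhds hsI] with y hy
        exact hgψ y hy
      have hmul : HasDerivAt (fun y => φ y * ψ y) (deriv φ s * ψ s + φ s * χ s) s :=
        (hφdiff s).hasDerivAt.mul (hψd s hsI)
      rw [hdFg.deriv_eq, hgev.deriv_eq, hmul.deriv]
    have hFs0 : 0 ≤ F s := hFnn s hs0 hs1
    refine ⟨?_, ?_, ?_, ?_⟩
    · rw [hds]
      exact mul_nonneg (Real.exp_nonneg _) (mul_nonneg (hφ0 s) hψs0)
    · -- first upper bound
      rw [hds]
      rcases lt_or_ge s a with hsa | hsa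
      · -- s < a : F ≥ 0 and ψ is bounded
        have hv2 : s - 1 + κ < 2*κ^2 := by simp only [ha] at hsa; linarith
        have hE1 : Real.exp (-F s) ≤ 1 := Real.exp_le_one_iff.mpr (by linarith)
        have hvnn : 0 ≤ s - 1 + κ := le_trans hκ2.le hv0
        have hv4 : (s-1+κ)^2 ≤ 4*κ^4 := by nlinarith [hvnn, hv2]
        have hκ64 : κ^2 < 1/64 := by nlinarith
        have hψ5 : ψ s ≤ 5 := by
          rw [hψdef]; simp only
          rw [div_le_iff₀ hdpos]
          nlinarith [hv4, hκ64, hv2, hvnn, hκ2]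
        calc Real.exp (-F s) * (φ s * ψ s) ≤ 1 * (1 * ψ s) := by
              apply mul_le_mul hE1 _ (mul_nonneg (hφ0 s) hψs0) one_pos.le
              exact mul_le_mul_of_nonneg_right (hφ1 s) hψs0
          _ = ψ s := by ring
          _ ≤ 5 := hψ5
          _ ≤ 100/κ := by rw [le_div_iff₀ hκ0]; nlinarith
      · -- s ≥ a : use F s ≥ L s - L a
        have hφs1 : φ s = 1 := hφr s hsa
        have haI : a ∈ Set.Ioo (1-κ) 1 := ⟨hba.trans_le' h1κb.le, ha1⟩
        have hd4 : (0:ℝ) < 1 - 4*κ^2 := by nlinarith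
        have hFlow : L s - L a ≤ F s := by
          have hsplit : F s = F a + ∫ t in a..s, g t := by
            rw [hF s, hF a]
            exact (intervalIntegral.integral_add_adjacent_intervals
              (hIntg 0 a one_pos ha1) (hIntg a s ha1 hs1)).symm
          have hsub : Set.uIcc a s ⊆ Set.Ioo (1-κ) 1 := by
            rw [Set.uIcc_of_le hsa]
            intro x hx
            exact ⟨lt_of_lt_of_le (hba.trans_le' h1κb.le) hx.1, hx.2.trans_lt hs1⟩
          have hgL : ∫ t in a..s, g t = L s - L a := by
            rw [intervalIntegral.integral_congr (g := ψ) (fun x hx => by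
              rw [hgψ x (hsub hx), hφr x]
              · rw [one_mul]
              · exact ((Set.uIcc_of_le hsa ▸ hx).1 : a ≤ x))]
            refine intervalIntegral.integral_eq_sub_of_hasDerivAt
              (fun x hx => hLd x (hsub hx)) ?_
            apply ContinuousOn.intervalIntegrable
            exact fun x hx => ((hψd x (hsub hx)).continuousAt).continuousWithinAt
          rw [hsplit, hgL]
          linarith [hFnn a ha0.le ha1]
        have hexps : Real.exp (-L s) = (κ^2-(s-1+κ)^2)/κ^2 := by
          rw [hLdef]; simp only [neg_neg]
          rw [Real.exp_log (by rw [div_pow, sub_pos, div_lt_one hκ2]; nlinarith [hsI.1, hsI.2])]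
          field_simp
        have hexpa : Real.exp (L a) = (1-4*κ^2)⁻¹ := by
          rw [hLdef]; simp only
          have h2κ : (a-1+κ)/κ = 2*κ := by rw [ha]; field_simp; ring
          rw [h2κ]
          rw [show (1 - (2*κ)^2 : ℝ) = 1 - 4*κ^2 by ring]
          rw [Real.exp_neg, Real.exp_log hd4]
        have hE : Real.exp (-F s) ≤ (κ^2-(s-1+κ)^2)/κ^2 * (1-4*κ^2)⁻¹ := by
          calc Real.exp (-F s) ≤ Real.exp (L a - L s) := Real.exp_le_exp.mpr (by linarith)
            _ = Real.exp (L a) * Real.exp (-L s) := by rw [← Real.exp_add]; ring_nf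
            _ = (κ^2-(s-1+κ)^2)/κ^2 * (1-4*κ^2)⁻¹ := by rw [hexps, hexpa]; ring
        rw [hφs1, one_mul]
        calc Real.exp (-F s) * ψ s ≤ ((κ^2-(s-1+κ)^2)/κ^2 * (1-4*κ^2)⁻¹) * ψ s :=
              mul_le_mul_of_nonneg_right hE hψs0
          _ = 2*(s-1+κ)/(κ^2*(1-4*κ^2)) := by
              rw [hψdef]; field_simp
          _ ≤ 100/κ := by
              rw [div_le_div_iff₀ (by positivity) hκ0]
              nlinarith
    · rw [hdd]
      exact mul_nonneg (Real.exp_nonneg _)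
        (add_nonneg (mul_nonneg (hφd0 s) hψs0) (mul_nonneg (hφ0 s) hχs0))
    · -- second upper bound
      rw [hdd]
      rcases lt_or_ge s a with hsa | hsa
      · have hv2 : s - 1 + κ < 2*κ^2 := by simp only [ha] at hsa; linarith
        have hE1 : Real.exp (-2*F s) ≤ 1 := Real.exp_le_one_iff.mpr (by linarith)
        have hvnn : 0 ≤ s - 1 + κ := le_trans hκ2.le hv0
        have hv4 : (s-1+κ)^2 ≤ 4*κ^4 := by nlinarith [hvnn, hv2]
        have hκ64 : κ^2 < 1/64 := by nlinarith
        have hψ5 : ψ s ≤ 5 := by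
          rw [hψdef]; simp only
          rw [div_le_iff₀ hdpos]
          nlinarith [hv4, hκ64, hv2, hvnn, hκ2]
        have hχ3 : χ s ≤ 3/κ^2 := by
          rw [hχdef]; simp only
          rw [div_le_div_iff₀ (by positivity) hκ2]
          nlinarith [hv4, hκ64, hvnn, hκ2, mul_pos hκ2 hκ2,
            mul_le_mul_of_nonneg_left hv4 hκ2.le, sq_nonneg (κ^2 - (s-1+κ)^2)]
        calc Real.exp (-2*F s) * (deriv φ s * ψ s + φ s * χ s)
            ≤ 1 * ((2/κ^2) * 5 + 1 * (3/κ^2)) := by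
              apply mul_le_mul hE1 _ _ one_pos.le
              · apply add_le_add
                · exact mul_le_mul (hφd2 s) hψ5 hψs0 (by positivity)
                · exact mul_le_mul (hφ1 s) hχ3 hχs0 one_pos.le
              · exact add_nonneg (mul_nonneg (hφd0 s) hψs0) (mul_nonneg (hφ0 s) hχs0)
          _ = 13/κ^2 := by ring
          _ ≤ 100/κ^2 := by gcongr; norm_num
      · have hφs1 : φ s = 1 := hφr s hsa
        have hφ'0 : deriv φ s = 0 := by
          have hmax : IsLocalMax φ s :=
            Filter.Eventually.of_forall (fun y => hφs1 ▸ hφ1 y)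
          exact hmax.deriv_eq_zero
        have hd4 : (0:ℝ) < 1 - 4*κ^2 := by nlinarith
        -- same F lower bound as before
        have hFlow : L s - L a ≤ F s := by
          have hsplit : F s = F a + ∫ t in a..s, g t := by
            rw [hF s, hF a]
            exact (intervalIntegral.integral_add_adjacent_intervals
              (hIntg 0 a one_pos ha1) (hIntg a s ha1 hs1)).symm
          have hsub : Set.uIcc a s ⊆ Set.Ioo (1-κ) 1 := by
            rw [Set.uIcc_of_le hsa]
            intro x hx
            exact ⟨lt_of_lt_of_le (hba.trans_le' h1κb.le) hx.1, hx.2.trans_lt hs1⟩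
          have hgL : ∫ t in a..s, g t = L s - L a := by
            rw [intervalIntegral.integral_congr (g := ψ) (fun x hx => by
              rw [hgψ x (hsub hx), hφr x]
              · rw [one_mul]
              · exact ((Set.uIcc_of_le hsa ▸ hx).1 : a ≤ x))]
            refine intervalIntegral.integral_eq_sub_of_hasDerivAt
              (fun x hx => hLd x (hsub hx)) ?_
            apply ContinuousOn.intervalIntegrable
            exact fun x hx => ((hψd x (hsub hx)).continuousAt).continuousWithinAt
          rw [hsplit, hgL]
          linarith [hFnn a ha0.le ha1]
        have hexps : Real.exp (-L s) = (κ^2-(s-1+κ)^2)/κ^2 := by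
          rw [hLdef]; simp only [neg_neg]
          rw [Real.exp_log (by rw [div_pow, sub_pos, div_lt_one hκ2]; nlinarith [hsI.1, hsI.2])]
          field_simp
        have hexpa : Real.exp (L a) = (1-4*κ^2)⁻¹ := by
          rw [hLdef]; simp only
          have h2κ : (a-1+κ)/κ = 2*κ := by rw [ha]; field_simp; ring
          rw [h2κ]
          rw [show (1 - (2*κ)^2 : ℝ) = 1 - 4*κ^2 by ring]
          rw [Real.exp_neg, Real.exp_log hd4]
        have hE : Real.exp (-F s) ≤ (κ^2-(s-1+κ)^2)/κ^2 * (1-4*κ^2)⁻¹ := by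
          calc Real.exp (-F s) ≤ Real.exp (L a - L s) := Real.exp_le_exp.mpr (by linarith)
            _ = Real.exp (L a) * Real.exp (-L s) := by rw [← Real.exp_add]; ring_nf
            _ = (κ^2-(s-1+κ)^2)/κ^2 * (1-4*κ^2)⁻¹ := by rw [hexps, hexpa]; ring
        have hBnn : (0:ℝ) ≤ (κ^2-(s-1+κ)^2)/κ^2 * (1-4*κ^2)⁻¹ := by positivity
        have hE2 : Real.exp (-2*F s) ≤ ((κ^2-(s-1+κ)^2)/κ^2 * (1-4*κ^2)⁻¹)^2 := by
          rw [show (-2*F s : ℝ) = -F s + -F s by ring, Real.exp_add, sq]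
          exact mul_le_mul hE hE (Real.exp_nonneg _) hBnn
        rw [hφ'0, zero_mul, zero_add, hφs1, one_mul]
        calc Real.exp (-2*F s) * χ s
            ≤ ((κ^2-(s-1+κ)^2)/κ^2 * (1-4*κ^2)⁻¹)^2 * χ s :=
              mul_le_mul_of_nonneg_right hE2 hχs0
          _ = 2*(κ^2+(s-1+κ)^2)/(κ^4*(1-4*κ^2)^2) := by
              rw [hχdef]; field_simp
          _ ≤ 100/κ^2 := by
              rw [div_le_div_iff₀ (by positivity) hκ2]
              nlinarith [sq_nonneg (s-1+κ), mul_pos hκ2 hκ2]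
end

section
/- There exist absolute constants c₂ > 0 and c₃ > 0 (independent of κ and φ) such that for every κ ∈ (0, 1/8), every admissible φ, and every s with 1−2κ < s < 1, there exists τ > 0 with 0 < s−τ < s+τ < 1, 1 ≤ exp(F(s+τ) − F(s−τ)) ≤ 1 + c₂κ, and τ·exp(F(s−τ)) ≥ c₃κ². -/
set_option maxHeartbeats 2000000
open Real Set MeasureTheory intervalIntegral

private lemma sq_pos_lemma (y : ℝ) (h0 : 0 < y) (h1 : y < 1) : 0 < 1 - y^2 := by nlinarith

private lemma sq_34_lemma (y : ℝ) (h0 : 0 < y) (h1 : y < 1/2) : 3/4 ≤ 1 - y^2 := by nlinarith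

private lemma two_k_sq_lemma (κ : ℝ) (hκ0 : 0 < κ) (hκ8 : κ < 1/8) : 2*κ^2 < κ := by nlinarith

private lemma c22_pos_lemma (κ : ℝ) (hκ0 : 0 < κ) (hκ8 : κ < 1/8) :
    0 < 1 - 22*κ^2 := by nlinarith

private lemma c22_prod_lemma (κ : ℝ) (hκ0 : 0 < κ) (hκ8 : κ < 1/8) :
    (1:ℝ) ≤ (1+6*κ)*(1-22*κ^2) := by nlinarith

private lemma exp_div_lemma (E y c : ℝ) (hE : 0 < E) (hy : 0 < 1-y)
    (h1 : E*(1-y) ≤ 1) (h2 : 1 ≤ c*(1-y)) : E ≤ c := by nlinarith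

private lemma tlb_lemma (κ t : ℝ) (hκ0 : 0 < κ) (hκ8 : κ < 1/8) (ht0 : 0 < t)
    (h : κ - 2*κ^2 ≤ t + κ*t/2) : 2*κ/5 ≤ t := by nlinarith

private lemma taulb_lemma (κ t : ℝ) (hκ0 : 0 < κ) (h : 2*κ/5 ≤ t) :
    κ^2/5 ≤ κ*t/2 := by nlinarith

private lemma tauk2_lemma (κ t : ℝ) (hκ0 : 0 < κ) (h : t < 2*κ) :
    κ*t/2 < κ^2 := by nlinarith

private lemma taut_lemma (κ t : ℝ) (hκ8 : κ < 1/8) (ht0 : 0 < t) :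
    κ*t/2 < t := by nlinarith

private lemma step2_lemma (κ t τ : ℝ) (hκ0 : 0 < κ) (hκ8 : κ < 1/8) (ht0 : 0 < t)
    (hτ : τ = κ*t/2) : t+τ ≤ (1+6*κ)*(t-τ) := by
  nlinarith [mul_pos hκ0 ht0, mul_pos (mul_pos hκ0 hκ0) ht0]

private lemma ldiv_lemma (k A B c : ℝ) (hk : 0 < k) (h : k*A ≤ c*(k*B)) :
    A ≤ c*B := by nlinarith

private lemma key_lemma (κ t τ w : ℝ) (hκ0 : 0 < κ) (hκ8 : κ < 1/8) (ht0 : 0 < t)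
    (ht2κ : t < 2*κ) (hτ : τ = κ*t/2) (hτ0 : 0 < τ)
    (e1 : κ^2 * w = (t+τ)*(2*κ-t-τ)) (htτκ : t + τ < κ - 2*κ^2) :
    1/5*κ^2 * w ≤ τ * (1 - (2*κ)^2) := by
  nlinarith [e1, htτκ, mul_pos hκ0 hκ0, ht0, ht2κ, mul_pos hκ0 ht0, mul_pos hκ0 hτ0]

/-- There are absolute constants `c₂, c₃ > 0` (independent of `κ` and `φ`) such
that for every `κ ∈ (0, 1/8)`, every admissible cutoff `φ`, `F(s) = ∫₀^s φ f'`,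
and every `s` with `1 - 2κ < s < 1`, there exists `τ > 0` with
`0 < s - τ < s + τ < 1`, `1 ≤ exp(F(s+τ) - F(s-τ)) ≤ 1 + c₂ κ` and
`τ · exp(F(s-τ)) ≥ c₃ κ²`. -/
theorem stmt_6 :
    ∃ c₂ : ℝ, ∃ c₃ : ℝ, 0 < c₂ ∧ 0 < c₃ ∧
      ∀ (κ : ℝ), 0 < κ → κ < 1/8 →
      ∀ (f φ F : ℝ → ℝ),
        (∀ s : ℝ, f s = if s ≤ 1 - κ then 0 else -Real.log (1 - ((s - 1 + κ) / κ)^2)) →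
        ContDiff ℝ (⊤ : ℕ∞) φ → (∀ s, 0 ≤ φ s) → (∀ s, φ s ≤ 1) →
        (∀ s, s ≤ 1 - κ + κ^2 → φ s = 0) →
        (∀ s, 1 - κ + 2 * κ^2 ≤ s → φ s = 1) →
        (∀ s, 0 ≤ deriv φ s) → (∀ s, deriv φ s ≤ 2 / κ^2) →
        (∀ s : ℝ, F s = ∫ τ in (0:ℝ)..s, φ τ * deriv f τ) →
        ∀ s : ℝ, 1 - 2 * κ < s → s < 1 →
          ∃ τ : ℝ, 0 < τ ∧ 0 < s - τ ∧ s + τ < 1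
            ∧ 1 ≤ Real.exp (F (s + τ) - F (s - τ))
            ∧ Real.exp (F (s + τ) - F (s - τ)) ≤ 1 + c₂ * κ
            ∧ c₃ * κ^2 ≤ τ * Real.exp (F (s - τ)) := by
  refine ⟨6, 1/5, by norm_num, by norm_num, ?_⟩
  intro κ hκ0 hκ8 f φ F hf hφsm hφ0 hφ1 hφlo hφhi _ _ hF s hs1 hs2
  have hκ2 : (0:ℝ) < κ^2 := by positivity
  have h2κκ : 2*κ^2 < κ := two_k_sq_lemma κ hκ0 hκ8
  set x : ℝ → ℝ := fun u => (u - 1 + κ)/κ with hx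
  set D : ℝ → ℝ := fun u => 2 * x u / κ / (1 - (x u)^2) with hD
  set g : ℝ → ℝ := fun u => φ u * deriv f u with hg
  -- derivative of f on (1-κ, 1)
  have hfD : ∀ u ∈ Ioo (1-κ) 1, HasDerivAt f (D u) u := by
    intro u hu
    have hx0 : 0 < (u-1+κ)/κ := div_pos (by linarith [hu.1]) hκ0
    have hx1 : (u-1+κ)/κ < 1 := (div_lt_one hκ0).mpr (by linarith [hu.2])
    have hw0 : 0 < 1 - ((u-1+κ)/κ)^2 := sq_pos_lemma _ hx0 hx1
    have h1 : HasDerivAt (fun v : ℝ => (v - 1 + κ)/κ) (1/κ) u := by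
      simpa using (((hasDerivAt_id u).sub_const 1).add_const κ).div_const κ
    have h2 : HasDerivAt (fun v : ℝ => 1 - ((v-1+κ)/κ)^2) (-(2 * ((u-1+κ)/κ) * (1/κ))) u := by
      exact ((h1.pow 2).const_sub 1).congr_deriv (by push_cast; ring)
    have h3 := ((Real.hasDerivAt_log hw0.ne').comp u h2).neg
    have h4 : HasDerivAt (fun v : ℝ => -Real.log (1 - ((v-1+κ)/κ)^2)) (D u) u := by
      refine h3.congr_deriv ?_
      show _ = 2 * ((u - 1 + κ)/κ) / κ / (1 - ((u - 1 + κ)/κ)^2)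
      ring
    apply h4.congr_of_eventuallyEq
    filter_upwards [Ioi_mem_nhds hu.1] with v hv
    rw [hf v, if_neg (not_le.mpr hv)]
  have hxpos : ∀ u ∈ Ioo (1-κ) 1, 0 < x u := by
    intro u hu; exact div_pos (by linarith [hu.1]) hκ0
  have hxlt1 : ∀ u ∈ Ioo (1-κ) 1, x u < 1 := by
    intro u hu; exact (div_lt_one hκ0).mpr (by linarith [hu.2])
  have hwpos : ∀ u ∈ Ioo (1-κ) 1, 0 < 1 - (x u)^2 := by
    intro u hu; exact sq_pos_lemma _ (hxpos u hu) (hxlt1 u hu)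
  have hDnn : ∀ u ∈ Ioo (1-κ) 1, 0 ≤ D u := by
    intro u hu
    exact div_nonneg (div_nonneg (by linarith [hxpos u hu]) hκ0.le) (hwpos u hu).le
  have hxc : Continuous x := by
    simp only [hx]; exact ((continuous_id.sub continuous_const).add continuous_const).div_const κ
  have hDcont : ContinuousOn D (Ioo (1-κ) 1) := by
    apply ContinuousOn.div
    · exact ((continuous_const.mul hxc).div_const κ).continuousOn
    · exact (continuous_const.sub (hxc.pow 2)).continuousOn
    · intro u hu; exact (hwpos u hu).ne'
  have hgca : ∀ u < (1:ℝ), ContinuousAt g u := by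
    intro u hu
    by_cases hc : 1 - κ < u
    · have hev : (fun v => φ v * D v) =ᶠ[nhds u] g := by
        filter_upwards [Ioo_mem_nhds hc hu] with v hv
        simp only [hg]
        rw [(hfD v hv).deriv]
      exact ((hφsm.continuous.continuousAt).mul
        (hDcont.continuousAt (Ioo_mem_nhds hc hu))).congr hev
    · push_neg at hc
      have hev : (fun _ : ℝ => (0:ℝ)) =ᶠ[nhds u] g := by
        filter_upwards [Iio_mem_nhds (show u < 1-κ+κ^2 by linarith only [hc, hκ2])] with v hv
        simp only [hg]
        rw [hφlo v hv.le, zero_mul]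
      exact continuousAt_const.congr hev
  have hgcont : ContinuousOn g (Iio 1) := fun u hu => (hgca u hu).continuousWithinAt
  have hIg : ∀ a b : ℝ, a < 1 → b < 1 → IntervalIntegrable g volume a b := by
    intro a b ha hb
    exact (hgcont.mono (fun u hu => mem_Iio.mpr
      (lt_of_le_of_lt hu.2 (sup_lt_iff.mpr ⟨ha, hb⟩)))).intervalIntegrable
  have hFeq : ∀ a b : ℝ, a < 1 → b < 1 → F b - F a = ∫ u in a..b, g u := by
    intro a b ha hb
    rw [hF a, hF b, intervalIntegral.integral_interval_sub_left (hIg 0 b (by norm_num) hb)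
      (hIg 0 a (by norm_num) ha)]
  have hgnn : ∀ u < (1:ℝ), 0 ≤ g u := by
    intro u hu
    by_cases hle : u ≤ 1-κ+κ^2
    · simp only [hg]; rw [hφlo u hle, zero_mul]
    · push_neg at hle
      have huI : u ∈ Ioo (1-κ) 1 := ⟨by linarith only [hle, hκ2], hu⟩
      simp only [hg]; rw [(hfD u huI).deriv]
      exact mul_nonneg (hφ0 u) (hDnn u huI)
  -- set up τ
  set t : ℝ := 1 - s with ht
  have ht0 : 0 < t := by simp only [ht]; linarith
  have ht2κ : t < 2*κ := by simp only [ht]; linarith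
  set τ : ℝ := κ * t / 2 with hτ
  have hτ0 : 0 < τ := by positivity
  have hτκ2 : τ < κ^2 := by rw [hτ]; exact tauk2_lemma κ t hκ0 ht2κ
  have hτt : τ < t := by rw [hτ]; exact taut_lemma κ t hκ8 ht0
  have hst0 : 0 < s - τ := by
    have : κ^2 < 1/16 := by nlinarith
    linarith only [hs1, hτκ2, hκ8, this]
  have hst1 : s + τ < 1 := by simp only [ht] at hτt; linarith
  have hstle : s - τ ≤ s + τ := by linarith
  have hFd : F (s+τ) - F (s-τ) = ∫ u in (s-τ)..(s+τ), g u :=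
    hFeq _ _ (by linarith) hst1
  have hFd0 : 0 ≤ F (s+τ) - F (s-τ) := by
    rw [hFd]
    exact intervalIntegral.integral_nonneg hstle
      (fun u hu => hgnn u (lt_of_le_of_lt hu.2 hst1))
  have hFs0 : 0 ≤ F (s-τ) := by
    rw [hF]
    exact intervalIntegral.integral_nonneg hst0.le
      (fun u hu => hgnn u (lt_of_le_of_lt hu.2 (by linarith)))
  have hmain : Real.exp (F (s + τ) - F (s - τ)) ≤ 1 + 6 * κ ∧
      1/5 * κ^2 ≤ τ * Real.exp (F (s - τ)) := by
    by_cases hcase : s - τ ≤ 1 - κ + 2*κ^2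
    · -- Case A': s - τ below the plateau threshold
      constructor
      · -- exp bound via pointwise bound g ≤ 11
        have hpt : ∀ u ∈ Icc (s-τ) (s+τ), g u ≤ 11 := by
          intro u hu
          by_cases hle : u ≤ 1-κ+κ^2
          · simp only [hg]; rw [hφlo u hle, zero_mul]; norm_num
          · push_neg at hle
            have hu1 : u < 1 := lt_of_le_of_lt hu.2 hst1
            have huI : u ∈ Ioo (1-κ) 1 := ⟨by linarith only [hle, hκ2], hu1⟩
            have hub : u < 1-κ+4*κ^2 := by linarith only [hu.2, hτκ2, hcase]
            have hX1 : x u < 4*κ := by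
              simp only [hx]; rw [div_lt_iff₀ hκ0]; linarith only [hub]
            have hX0 : 0 < x u := hxpos u huI
            have hXh : x u < 1/2 := by linarith only [hX1, hκ8]
            have hwge : (3:ℝ)/4 ≤ 1 - (x u)^2 := sq_34_lemma _ hX0 hXh
            have hD11 : D u ≤ 11 := by
              simp only [hD]
              rw [div_le_iff₀ (by linarith only [hwge] : (0:ℝ) < 1 - (x u)^2)]
              have h8 : 2 * x u / κ ≤ 8 := by
                rw [div_le_iff₀ hκ0]; linarith only [hX1]
              linarith only [h8, hwge]
            simp only [hg]; rw [(hfD u huI).deriv]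
            calc φ u * D u ≤ 1 * D u := mul_le_mul_of_nonneg_right (hφ1 u) (hDnn u huI)
            _ ≤ 11 := by linarith
        have hint : (∫ u in (s-τ)..(s+τ), g u) ≤ 22*τ := by
          have h := intervalIntegral.integral_mono_on hstle
            (hIg _ _ (by linarith) hst1) intervalIntegrable_const hpt
          rw [intervalIntegral.integral_const, smul_eq_mul] at h
          linarith
        have hy : F (s+τ) - F (s-τ) ≤ 22*κ^2 := by rw [hFd]; linarith
        have hbpos : (0:ℝ) < 1 - 22*κ^2 := c22_pos_lemma κ hκ0 hκ8
        have e1 : Real.exp (22*κ^2) * (1 - 22*κ^2) ≤ 1 := by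
          have h := Real.add_one_le_exp (-(22*κ^2))
          calc Real.exp (22*κ^2) * (1 - 22*κ^2)
              ≤ Real.exp (22*κ^2) * Real.exp (-(22*κ^2)) :=
                mul_le_mul_of_nonneg_left (by linarith) (Real.exp_pos _).le
          _ = 1 := by rw [← Real.exp_add]; simp
        have hfin : Real.exp (22*κ^2) ≤ 1 + 6*κ :=
          exp_div_lemma _ _ _ (Real.exp_pos _) hbpos e1 (c22_prod_lemma κ hκ0 hκ8)
        calc Real.exp (F (s+τ) - F (s-τ)) ≤ Real.exp (22*κ^2) := Real.exp_le_exp.mpr hy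
        _ ≤ 1 + 6*κ := hfin
      · -- lower bound: τ itself is large
        have hlin : κ - 2*κ^2 ≤ t + κ*t/2 := by linarith only [hcase, ht, hτ]
        have htlb : 2*κ/5 ≤ t := tlb_lemma κ t hκ0 hκ8 ht0 hlin
        have hτlb : κ^2/5 ≤ τ := by rw [hτ]; exact taulb_lemma κ t hκ0 htlb
        have hexp1 : 1 ≤ Real.exp (F (s-τ)) := Real.one_le_exp hFs0
        calc 1/5*κ^2 ≤ τ := by linarith
        _ = τ * 1 := (mul_one τ).symm
        _ ≤ τ * Real.exp (F (s-τ)) := mul_le_mul_of_nonneg_left hexp1 hτ0.le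
    · -- Case B': whole interval inside the region where f is smooth and φ = 1 below
      push_neg at hcase
      have hsub : Icc (s-τ) (s+τ) ⊆ Ioo (1-κ) 1 := by
        intro u hu
        exact ⟨by linarith only [hu.1, hcase, hκ2], lt_of_le_of_lt hu.2 hst1⟩
      have hsub' : uIcc (s-τ) (s+τ) ⊆ Ioo (1-κ) 1 := by
        rw [uIcc_of_le hstle]; exact hsub
      have hID : IntervalIntegrable D volume (s-τ) (s+τ) :=
        (hDcont.mono hsub').intervalIntegrable
      have hFTC : ∫ u in (s-τ)..(s+τ), D u = f (s+τ) - f (s-τ) :=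
        intervalIntegral.integral_eq_sub_of_hasDerivAt (fun u hu => hfD u (hsub' hu)) hID
      have hmono : (∫ u in (s-τ)..(s+τ), g u) ≤ ∫ u in (s-τ)..(s+τ), D u := by
        apply intervalIntegral.integral_mono_on hstle (hIg _ _ (by linarith) hst1) hID
        intro u hu
        have huI := hsub hu
        simp only [hg]; rw [(hfD u huI).deriv]
        calc φ u * D u ≤ 1 * D u := mul_le_mul_of_nonneg_right (hφ1 u) (hDnn u huI)
        _ = D u := one_mul _
      have hsmI : s - τ ∈ Ioo (1-κ) 1 := hsub ⟨le_refl _, hstle⟩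
      have hspI : s + τ ∈ Ioo (1-κ) 1 := hsub ⟨hstle, le_refl _⟩
      have hwm : 0 < 1 - (x (s-τ))^2 := hwpos _ hsmI
      have hwp : 0 < 1 - (x (s+τ))^2 := hwpos _ hspI
      have hfm : f (s-τ) = -Real.log (1 - (x (s-τ))^2) := by
        rw [hf]; rw [if_neg (not_le.mpr hsmI.1)]
      have hfp : f (s+τ) = -Real.log (1 - (x (s+τ))^2) := by
        rw [hf]; rw [if_neg (not_le.mpr hspI.1)]
      have hFdle : F (s+τ) - F (s-τ) ≤ f (s+τ) - f (s-τ) := by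
        rw [hFd, ← hFTC]; exact hmono
      have e1 : κ^2 * (1 - (x (s-τ))^2) = (t+τ)*(2*κ-t-τ) := by
        simp only [hx, ht]; field_simp; ring
      have e2 : κ^2 * (1 - (x (s+τ))^2) = (t-τ)*(2*κ-t+τ) := by
        simp only [hx, ht]; field_simp; ring
      have htτκ : t + τ < κ - 2*κ^2 := by linarith only [hcase, ht]
      constructor
      · -- exp bound
        have hC0 : (0:ℝ) < 2*κ-t-τ := by linarith only [htτκ, hκ0, hκ2]
        have hD0 : (0:ℝ) < 2*κ-t+τ := by linarith only [hC0, hτ0]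
        have step1 : (t+τ)*(2*κ-t-τ) ≤ (t+τ)*(2*κ-t+τ) :=
          mul_le_mul_of_nonneg_left (by linarith only [hτ0]) (by linarith only [ht0, hτ0])
        have step2 : t+τ ≤ (1+6*κ)*(t-τ) := step2_lemma κ t τ hκ0 hκ8 ht0 hτ
        have step3 : (t+τ)*(2*κ-t+τ) ≤ ((1+6*κ)*(t-τ))*(2*κ-t+τ) :=
          mul_le_mul_of_nonneg_right step2 hD0.le
        have hW : κ^2 * (1 - (x (s-τ))^2) ≤ (1+6*κ)*(κ^2 * (1 - (x (s+τ))^2)) := by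
          rw [e1, e2]
          calc (t+τ)*(2*κ-t-τ) ≤ ((1+6*κ)*(t-τ))*(2*κ-t+τ) := step1.trans step3
          _ = (1+6*κ)*((t-τ)*(2*κ-t+τ)) := by ring
        have hratio : (1 - (x (s-τ))^2) / (1 - (x (s+τ))^2) ≤ 1 + 6*κ := by
          rw [div_le_iff₀ hwp]
          exact ldiv_lemma (κ^2) _ _ _ hκ2 hW
        calc Real.exp (F (s+τ) - F (s-τ)) ≤ Real.exp (f (s+τ) - f (s-τ)) :=
              Real.exp_le_exp.mpr hFdle
        _ = (1 - (x (s-τ))^2) / (1 - (x (s+τ))^2) := by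
            rw [hfm, hfp,
              show -Real.log (1 - (x (s+τ))^2) - -Real.log (1 - (x (s-τ))^2)
                = Real.log (1 - (x (s-τ))^2) - Real.log (1 - (x (s+τ))^2) by ring,
              Real.exp_sub, Real.exp_log hwm, Real.exp_log hwp]
        _ ≤ 1 + 6*κ := hratio
      · -- lower bound via plateau comparison
        have ha1 : (1:ℝ) - κ + 2*κ^2 < 1 := by linarith only [h2κκ]
        have hFa0 : 0 ≤ F (1-κ+2*κ^2) := by
          rw [hF]
          exact intervalIntegral.integral_nonneg (by linarith only [hκ8, hκ2])
            (fun u hu => hgnn u (lt_of_le_of_lt hu.2 ha1))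
        have haI : uIcc (1-κ+2*κ^2) (s-τ) ⊆ Ioo (1-κ) 1 := by
          intro u hu
          rw [uIcc_of_le (le_of_lt hcase)] at hu
          exact ⟨by linarith only [hu.1, hκ2], lt_of_le_of_lt hu.2 (by linarith)⟩
        have hcongr : EqOn g D (uIcc (1-κ+2*κ^2) (s-τ)) := by
          intro u hu
          have huI := haI hu
          have hu1 : 1-κ+2*κ^2 ≤ u := by
            rw [uIcc_of_le (le_of_lt hcase)] at hu; exact hu.1
          simp only [hg]; rw [(hfD u huI).deriv, hφhi u hu1, one_mul]
        have hFsa : F (s-τ) - F (1-κ+2*κ^2) = f (s-τ) - f (1-κ+2*κ^2) := by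
          rw [hFeq _ _ ha1 (by linarith), intervalIntegral.integral_congr hcongr]
          exact intervalIntegral.integral_eq_sub_of_hasDerivAt
            (fun u hu => hfD u (haI hu)) ((hDcont.mono haI).intervalIntegrable)
        have harg : ((1:ℝ)-κ+2*κ^2 - 1 + κ)/κ = 2*κ := by
          rw [div_eq_iff hκ0.ne']; ring
        have hnot : ¬(1-κ+2*κ^2 ≤ 1-κ) := by push_neg; linarith only [hκ2]
        have hfa : f (1-κ+2*κ^2) = -Real.log (1 - (2*κ)^2) := by
          rw [hf]; rw [if_neg hnot]; rw [harg]
        have hwa : (0:ℝ) < 1 - (2*κ)^2 := by nlinarith [h2κκ, hκ0, hκ8]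
        have hFlb : Real.log (1 - (2*κ)^2) - Real.log (1 - (x (s-τ))^2) ≤ F (s-τ) := by
          have h := hFsa
          rw [hfm, hfa] at h
          linarith
        have hexplb : (1 - (2*κ)^2) / (1 - (x (s-τ))^2) ≤ Real.exp (F (s-τ)) := by
          calc (1 - (2*κ)^2) / (1 - (x (s-τ))^2)
              = Real.exp (Real.log (1 - (2*κ)^2) - Real.log (1 - (x (s-τ))^2)) := by
                rw [Real.exp_sub, Real.exp_log hwa, Real.exp_log hwm]
          _ ≤ Real.exp (F (s-τ)) := Real.exp_le_exp.mpr hFlb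
        have hkey : 1/5*κ^2 ≤ τ * ((1 - (2*κ)^2) / (1 - (x (s-τ))^2)) := by
          rw [← mul_div_assoc, le_div_iff₀ hwm]
          exact key_lemma κ t τ _ hκ0 hκ8 ht0 ht2κ hτ hτ0 e1 htτκ
        calc 1/5*κ^2 ≤ τ * ((1 - (2*κ)^2) / (1 - (x (s-τ))^2)) := hkey
        _ ≤ τ * Real.exp (F (s-τ)) := mul_le_mul_of_nonneg_left hexplb hτ0.le
  exact ⟨τ, hτ0, hst0, hst1, Real.one_le_exp hFd0, hmain.1, hmain.2⟩
end

section
/- For every s with 1−2κ ≤ s ≤ 1−(2/3)κ, taking τ = κ² one has 0 < s−τ < s+τ < 1 and 0 ≤ F(s+τ) − F(s−τ) ≤ 4κ. -/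
set_option maxHeartbeats 1000000


/-- With `κ`, `f`, admissible `φ` and `F(s) = ∫₀^s φ f'` as in the context:
for every `s` with `1 - 2κ ≤ s ≤ 1 - (2/3)κ`, taking `τ = κ²` one has
`0 < s - τ < s + τ < 1` and `0 ≤ F(s+τ) - F(s-τ) ≤ 4κ`. -/
theorem stmt_7 (κ : ℝ) (hκ0 : 0 < κ) (hκ1 : κ < 1/8)
    (f : ℝ → ℝ)
    (hf : ∀ s : ℝ, f s = if s ≤ 1 - κ then 0 else -Real.log (1 - ((s - 1 + κ) / κ)^2))
    (φ : ℝ → ℝ) (hφsmooth : ContDiff ℝ (⊤ : ℕ∞) φ)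
    (hφ0 : ∀ s, 0 ≤ φ s) (hφ1 : ∀ s, φ s ≤ 1)
    (hφa : ∀ s, s ≤ 1 - κ + κ^2 → φ s = 0)
    (hφb : ∀ s, 1 - κ + 2 * κ^2 ≤ s → φ s = 1)
    (hφ'0 : ∀ s, 0 ≤ deriv φ s) (hφ'1 : ∀ s, deriv φ s ≤ 2 / κ^2)
    (F : ℝ → ℝ) (hF : ∀ s : ℝ, F s = ∫ τ in (0:ℝ)..s, φ τ * deriv f τ) :
    ∀ s : ℝ, 1 - 2 * κ ≤ s → s ≤ 1 - (2/3) * κ →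
      0 < s - κ^2 ∧ s - κ^2 < s + κ^2 ∧ s + κ^2 < 1
      ∧ 0 ≤ F (s + κ^2) - F (s - κ^2)
      ∧ F (s + κ^2) - F (s - κ^2) ≤ 4 * κ := by
  intro s hs1 hs2
  set a := s - κ^2 with ha
  set b := s + κ^2 with hb
  have hκ2 : κ^2 < κ := by nlinarith
  have h0a : 0 < a := by simp only [ha]; nlinarith
  have hab : a < b := by simp only [ha, hb]; nlinarith
  have hb1 : b < 1 := by simp only [hb]; nlinarith
  have hbhalf : b ≤ 1 - κ/2 := by simp only [hb]; nlinarith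
  refine ⟨h0a, hab, hb1, ?_⟩
  set D : ℝ → ℝ := fun u => (2 * (u - 1 + κ) / κ^2) / (1 - ((u - 1 + κ)/κ)^2) with hD
  set G : ℝ → ℝ := fun u => φ u * D u with hG
  -- derivative computation
  have hderiv : ∀ u : ℝ, 1 - κ < u → u < 1 → deriv f u = D u := by
    intro u hu1 hu2
    have hx0 : 0 < (u - 1 + κ) / κ := by
      apply div_pos (by linarith) hκ0
    have hx1 : (u - 1 + κ) / κ < 1 := by
      rw [div_lt_one hκ0]; linarith
    have hne : 1 - ((u - 1 + κ)/κ)^2 ≠ 0 := by nlinarith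
    have heq : f =ᶠ[nhds u] fun v => -Real.log (1 - ((v - 1 + κ)/κ)^2) := by
      filter_upwards [Ioi_mem_nhds hu1] with v hv
      rw [hf v, if_neg (not_le.mpr hv)]
    rw [heq.deriv_eq]
    have h1 : HasDerivAt (fun v : ℝ => (v - 1 + κ)/κ) (1/κ) u := by
      simpa using (((hasDerivAt_id u).sub_const 1).add_const κ).div_const κ
    have h2 : HasDerivAt (fun v : ℝ => 1 - ((v - 1 + κ)/κ)^2)
        (-(2 * ((u - 1 + κ)/κ) * (1/κ))) u := by
      simpa using ((h1.pow 2).const_sub (1:ℝ))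
    have h3 : HasDerivAt (fun v : ℝ => -Real.log (1 - ((v - 1 + κ)/κ)^2)) (D u) u := by
      have hh := (h2.log hne).neg
      have : -(-(2 * ((u - 1 + κ)/κ) * (1/κ)) / (1 - ((u - 1 + κ)/κ)^2)) = D u := by
        rw [neg_div, neg_neg, hD]
        congr 1
        field_simp
      rw [this] at hh
      exact hh
    exact h3.deriv
  -- agreement of the integrand with G on Iic (1 - κ/2)
  have hEq : Set.EqOn (fun u => φ u * deriv f u) G (Set.Iic (1 - κ/2)) := by
    intro u hu
    simp only [Set.mem_Iic] at hu
    by_cases h : u ≤ 1 - κ + κ^2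
    · simp [hG, hφa u h]
    · push_neg at h
      have : deriv f u = D u := hderiv u (by nlinarith) (by nlinarith)
      simp [hG, this]
  -- continuity of G on Iic (1 - κ/2)
  have hGcont : ContinuousOn G (Set.Iic (1 - κ/2)) := by
    intro u hu
    simp only [Set.mem_Iic] at hu
    apply ContinuousAt.continuousWithinAt
    by_cases hd : (1 - ((u - 1 + κ)/κ)^2) = 0
    · -- then u = 1 - 2κ since u < 1; G vanishes near u
      have hu1 : u < 1 - κ + κ^2 := by
        have hx2 : ((u - 1 + κ)/κ)^2 = 1 := by linarith
        have hsq : (u - 1 + κ)^2 = κ^2 := by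
          field_simp at hx2
          linarith
        have hfac : (u - 1) * (u - (1 - 2*κ)) = 0 := by nlinarith
        rcases mul_eq_zero.mp hfac with h | h
        · nlinarith
        · nlinarith
      have : G =ᶠ[nhds u] fun _ => (0:ℝ) := by
        filter_upwards [Iio_mem_nhds hu1] with v hv
        simp [hG, hφa v (le_of_lt (lt_of_lt_of_le hv (by nlinarith)))]
      exact this.continuousAt
    · apply (hφsmooth.continuous.continuousAt).mul
      apply ContinuousAt.div
      · fun_prop
      · fun_prop
      · exact hd
  -- bounds for G on Icc a b
  have hbound : ∀ u ∈ Set.Icc a b, 0 ≤ G u ∧ G u ≤ 2/κ := by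
    intro u hu
    obtain ⟨hua, hub⟩ := hu
    by_cases h : u ≤ 1 - κ + κ^2
    · simp [hG, hφa u h]
      positivity
    · push_neg at h
      have hx0 : κ < (u - 1 + κ)/κ := by
        rw [lt_div_iff₀ hκ0]; nlinarith
      have hx1 : (u - 1 + κ)/κ ≤ 1/2 := by
        rw [div_le_iff₀ hκ0]; nlinarith
      have hQ : (3:ℝ)/4 ≤ 1 - ((u - 1 + κ)/κ)^2 := by nlinarith
      have hP0 : 0 ≤ 2 * (u - 1 + κ) / κ^2 := by
        apply div_nonneg (by nlinarith) (by positivity)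
      have hP1 : 2 * (u - 1 + κ) / κ^2 ≤ 1/κ := by
        rw [div_le_div_iff₀ (by positivity) hκ0]
        nlinarith
      have hD0 : 0 ≤ D u := div_nonneg hP0 (by linarith)
      have hD1 : D u ≤ 2/κ := by
        have step : D u ≤ (1/κ)/(3/4) :=
          div_le_div₀ (by positivity) hP1 (by norm_num) hQ
        have step2 : (1/κ)/((3:ℝ)/4) ≤ 2/κ := by
          have h4 : (1/κ)/((3:ℝ)/4) = 4/(3*κ) := by ring
          rw [h4, div_le_div_iff₀ (by positivity) hκ0]
          nlinarith
        exact step.trans step2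
      constructor
      · exact mul_nonneg (hφ0 u) hD0
      · calc φ u * D u ≤ 1 * D u := mul_le_mul_of_nonneg_right (hφ1 u) hD0
          _ = D u := one_mul _
          _ ≤ 2/κ := hD1
  -- integrability
  have hsub1 : Set.Icc (0:ℝ) a ⊆ Set.Iic (1 - κ/2) := fun u hu =>
    le_trans hu.2 (by linarith)
  have hsub2 : Set.Icc a b ⊆ Set.Iic (1 - κ/2) := fun u hu => le_trans hu.2 hbhalf
  have hInt1 : IntervalIntegrable (fun u => φ u * deriv f u) MeasureTheory.volume 0 a := by
    apply ContinuousOn.intervalIntegrable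
    rw [Set.uIcc_of_le h0a.le]
    exact (hGcont.mono hsub1).congr (fun u hu => hEq (hsub1 hu))
  have hInt2 : IntervalIntegrable (fun u => φ u * deriv f u) MeasureTheory.volume a b := by
    apply ContinuousOn.intervalIntegrable
    rw [Set.uIcc_of_le hab.le]
    exact (hGcont.mono hsub2).congr (fun u hu => hEq (hsub2 hu))
  have hsplit : F b - F a = ∫ u in a..b, φ u * deriv f u := by
    rw [hF, hF, ← intervalIntegral.integral_add_adjacent_intervals hInt1 hInt2]
    ring
  have hcongr : (∫ u in a..b, φ u * deriv f u) = ∫ u in a..b, G u := by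
    apply intervalIntegral.integral_congr
    rw [Set.uIcc_of_le hab.le]
    exact fun u hu => hEq (hsub2 hu)
  rw [hsplit, hcongr]
  constructor
  · apply intervalIntegral.integral_nonneg hab.le
    exact fun u hu => (hbound u hu).1
  · have hIntG : IntervalIntegrable G MeasureTheory.volume a b := by
      apply ContinuousOn.intervalIntegrable
      rw [Set.uIcc_of_le hab.le]
      exact hGcont.mono hsub2
    calc (∫ u in a..b, G u) ≤ ∫ _u in a..b, 2/κ := by
          apply intervalIntegral.integral_mono_on hab.le hIntG intervalIntegrable_const
          exact fun u hu => (hbound u hu).2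
      _ = (b - a) * (2/κ) := by
          rw [intervalIntegral.integral_const, smul_eq_mul]
      _ = 4 * κ := by
          have : b - a = 2 * κ^2 := by simp only [ha, hb]; ring
          rw [this]; field_simp; ring
end

section
/- For every s with 1−(2/3)κ ≤ s < 1 there exists τ with 0 < τ < (1−s)/2 such that exp(f(s+τ) − f(s−τ)) = 1 + (2/3)κ. -/
/-!
Write `s = 1 - κ + κ a` and `τ = κ t`, so that `1/3 ≤ a < 1` and, on the part of the domain
where `f` is not zero, `f (1 - κ + κ u) = -log (1 - u²)`. Then `exp (f (s + τ) - f (s - τ))`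
is the ratio `(1 - (a - t)²) / (1 - (a + t)²)`, and asking for it to equal `1 + d`, `d = 2κ/3`,
is the quadratic equation `d t² + 2a(2 + d) t - d(1 - a²) = 0`. Its left side is negative at
`t = 0` and equals `(1 - a)(2a - d(3 + a)/4) > 0` at `t = (1 - a)/2`, so the intermediate value
theorem gives a root in between.
-/

open Real Set

lemma exists_one_sub_sub_sq_eq_mul_one_sub_add_sq {a d : ℝ} (ha : 0 < a) (ha1 : a < 1)
    (hd : 0 < d) (hda : d ≤ 2 * a) :
    ∃ t ∈ Ioo 0 ((1 - a) / 2), 1 - (a - t) ^ 2 = (1 + d) * (1 - (a + t) ^ 2) := by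
  set q : ℝ → ℝ := fun t ↦ (1 - (a - t) ^ 2) - (1 + d) * (1 - (a + t) ^ 2)
  have hq_zero : q 0 = -(d * (1 - a ^ 2)) := by simp only [q]; ring
  have hq_half : q ((1 - a) / 2) = (1 - a) * (2 * a - d * (3 + a) / 4) := by simp only [q]; ring
  have hq_cont : Continuous q := by fun_prop
  have h0_mem : (0 : ℝ) ∈ Ioo (q 0) (q ((1 - a) / 2)) := by
    rw [hq_zero, hq_half]
    constructor
    · have : 0 < 1 - a ^ 2 := by nlinarith
      nlinarith
    · exact mul_pos (by linarith) (by nlinarith)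
  obtain ⟨t, ht, hqt⟩ :=
    intermediate_value_Ioo (by linarith) hq_cont.continuousOn h0_mem
  exact ⟨t, ht, sub_eq_zero.mp hqt⟩

lemma exp_neg_log_sub_neg_log {x y : ℝ} (hx : 0 < x) (hy : 0 < y) :
    exp (-log x - -log y) = y / x := by
  rw [sub_neg_eq_add, neg_add_eq_sub, exp_sub, exp_log hy, exp_log hx]

/-- With `κ` and `f` as in the context: for every `s` with `1 - (2/3)κ ≤ s < 1`
there exists `τ` with `0 < τ < (1-s)/2` such that
`exp(f(s+τ) - f(s-τ)) = 1 + (2/3)κ`. -/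
theorem stmt_10 (κ : ℝ) (hκ0 : 0 < κ) (hκ1 : κ < 1/8)
    (f : ℝ → ℝ)
    (hf : ∀ s : ℝ, f s = if s ≤ 1 - κ then 0 else -Real.log (1 - ((s - 1 + κ) / κ)^2)) :
    ∀ s : ℝ, 1 - (2/3) * κ ≤ s → s < 1 →
      ∃ τ : ℝ, 0 < τ ∧ τ < (1 - s)/2
        ∧ Real.exp (f (s + τ) - f (s - τ)) = 1 + (2/3) * κ := by
  have hf_pos : ∀ u, 0 < u → f (1 - κ + κ * u) = -log (1 - u ^ 2) := by
    intro u hu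
    rw [hf, if_neg (by nlinarith), show (1 - κ + κ * u - 1 + κ) / κ = u by field_simp; ring]
  intro s hs1 hs2
  obtain ⟨a, rfl⟩ : ∃ a, s = 1 - κ + κ * a := ⟨(s - 1 + κ) / κ, by field_simp; ring⟩
  have ha3 : 1 / 3 ≤ a := by nlinarith
  have ha1 : a < 1 := by nlinarith
  obtain ⟨t, ⟨ht0, hta⟩, heq⟩ := exists_one_sub_sub_sq_eq_mul_one_sub_add_sq
    (d := 2 / 3 * κ) (by linarith) ha1 (by positivity) (by linarith)
  have hplus : 0 < 1 - (a + t) ^ 2 := by nlinarith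
  have hminus : 0 < 1 - (a - t) ^ 2 := by nlinarith
  refine ⟨κ * t, by positivity, by nlinarith, ?_⟩
  rw [show 1 - κ + κ * a + κ * t = 1 - κ + κ * (a + t) by ring,
    show 1 - κ + κ * a - κ * t = 1 - κ + κ * (a - t) by ring,
    hf_pos _ (by linarith), hf_pos _ (by linarith), exp_neg_log_sub_neg_log hplus hminus,
    div_eq_iff hplus.ne', heq]
end

section
/- Let s and τ be real numbers with 1−(2/3)κ ≤ s < 1 and 0 < τ < (1−s)/2. If exp(f(s+τ) − f(s−τ)) = 1 + (2/3)κ, then τ·exp(f(s−τ)) ≥ κ²/(6(1 + (2/3)κ)). -/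
/-!
On `(1 - κ, 1)` we have `exp f = (1 - u²)⁻¹` with `u = (x - 1 + κ)/κ`. Both `s ± τ` lie in
that interval, with `u`-values `b < a` and `a - b = 2τ/κ`. The hypothesis says
`1 - b² = (1 + δ)(1 - a²)` with `δ = 2κ/3`, so `δ(1 - a²) = a² - b² ≤ 2(a - b)` as `a + b ≤ 2`; this bounds
`1 - b² = 1/exp(f(s - τ))` by a multiple of `τ`.
-/

open Real

lemma exp_neg_log_one_sub_sq {u : ℝ} (hu0 : 0 ≤ u) (hu1 : u < 1) :
    exp (-log (1 - u ^ 2)) = (1 - u ^ 2)⁻¹ := by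
  rw [exp_neg, exp_log (by nlinarith)]

lemma one_sub_sq_le_of_eq_mul {a b δ : ℝ} (hba : b ≤ a) (ha : a ≤ 1) (hδ : 0 < δ)
    (h : 1 - b ^ 2 = (1 + δ) * (1 - a ^ 2)) :
    1 - b ^ 2 ≤ 2 * (1 + δ) * (a - b) / δ := by
  have hdiff : δ * (1 - a ^ 2) ≤ 2 * (a - b) := by nlinarith
  rw [le_div_iff₀ hδ, h]
  nlinarith

theorem stmt_11_general (κ : ℝ) (hκ0 : 0 < κ)
    (f : ℝ → ℝ)
    (hf : ∀ s : ℝ, f s = if s ≤ 1 - κ then 0 else -Real.log (1 - ((s - 1 + κ) / κ)^2))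
    (s τ : ℝ) (hs1 : 1 - (2/3) * κ ≤ s)
    (hτ1 : 0 < τ) (hτ2 : τ < (1 - s)/2)
    (heq : Real.exp (f (s + τ) - f (s - τ)) = 1 + (2/3) * κ) :
    κ^2 / (6 * (1 + (2/3) * κ)) ≤ τ * Real.exp (f (s - τ)) := by
  have exp_f : ∀ x, 1 - κ < x → x < 1 → exp (f x) = (1 - ((x - 1 + κ) / κ) ^ 2)⁻¹ := by
    intro x hx0 hx1
    rw [hf, if_neg hx0.not_ge, exp_neg_log_one_sub_sq (div_nonneg (by linarith) hκ0.le)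
      ((div_lt_one hκ0).2 (by linarith))]
  set a := (s + τ - 1 + κ) / κ
  set b := (s - τ - 1 + κ) / κ
  have hb0 : 0 < b := div_pos (by linarith) hκ0
  have hba : b < a := div_lt_div_of_pos_right (by linarith) hκ0
  have ha1 : a < 1 := (div_lt_one hκ0).2 (by linarith)
  have hab : a - b = 2 * τ / κ := by rw [div_sub_div_same]; ring_nf
  have hratio : 1 - b ^ 2 = (1 + 2 / 3 * κ) * (1 - a ^ 2) := by
    rwa [exp_sub, exp_f _ (by linarith) (by linarith), exp_f _ (by linarith) (by linarith),
      inv_div_inv, div_eq_iff (by nlinarith)] at heq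
  have hbound := hab ▸ one_sub_sq_le_of_eq_mul hba.le ha1.le (by positivity) hratio
  have hb1 : 0 < 1 - b ^ 2 := by nlinarith
  rw [exp_f _ (by linarith) (by linarith), ← div_eq_mul_inv, div_le_div_iff₀ (by positivity) hb1]
  calc κ ^ 2 * (1 - b ^ 2) ≤ κ ^ 2 * (2 * (1 + 2 / 3 * κ) * (2 * τ / κ) / (2 / 3 * κ)) := by
        gcongr
    _ = τ * (6 * (1 + 2 / 3 * κ)) := by field_simp; ring

/-- With `κ` and `f` as in the context: if `1 - (2/3)κ ≤ s < 1`, `0 < τ < (1-s)/2`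
and `exp(f(s+τ) - f(s-τ)) = 1 + (2/3)κ`, then
`τ · exp(f(s-τ)) ≥ κ²/(6(1 + (2/3)κ))`. -/
theorem stmt_11 (κ : ℝ) (hκ0 : 0 < κ) (hκ1 : κ < 1/8)
    (f : ℝ → ℝ)
    (hf : ∀ s : ℝ, f s = if s ≤ 1 - κ then 0 else -Real.log (1 - ((s - 1 + κ) / κ)^2))
    (s τ : ℝ) (hs1 : 1 - (2/3) * κ ≤ s) (hs2 : s < 1)
    (hτ1 : 0 < τ) (hτ2 : τ < (1 - s)/2)
    (heq : Real.exp (f (s + τ) - f (s - τ)) = 1 + (2/3) * κ) :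
    κ^2 / (6 * (1 + (2/3) * κ)) ≤ τ * Real.exp (f (s - τ)) :=
  stmt_11_general κ hκ0 f hf s τ hs1 hτ1 hτ2 heq
end
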